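/- For any automorphism σ of the weighted graph G, any k-labeled graph F, and any map φ: [1,k] → V(G), we have hom_{σ∘φ}(F,G) = hom_φ(F,G). Consequently, the rank of the connection matrix M(k,G) is at most the number of orbits of Aut(G) acting on V(G)^k. -/

import Mathlib

open scoped BigOperators Classical

/-- A `k`-labeled graph: a finite multigraph (no loops) with `k` distinct
nodes labeled `1, …, k`. -/
structure KGraph (k : ℕ) where
  V : Type
  [fV : Fintype V]
  [dV : DecidableEq V]
  lab : Fin k → V
  lab_inj : Function.Injective lab
  edges : Multiset (V × V)
  loopless : ∀ e ∈ edges, e.1 ≠ e.2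

attribute [instance] KGraph.fV KGraph.dV

/-- The weighted partial homomorphism number `hom_φ(F, G)`, for a weighted graph `G`
on node set `W` with node weights `α` and edge weights `β`. -/
noncomputable def homPhi {k : ℕ} {W : Type} [Fintype W] [DecidableEq W]
    (α : W → ℝ) (β : W → W → ℝ) (F : KGraph k) (φ : Fin k → W) : ℝ :=
  ∑ ψ ∈ Finset.univ.filter (fun ψ : F.V → W => ψ ∘ F.lab = φ),
    ((∏ u, α (ψ u)) / ∏ i, α (φ i)) *
      (F.edges.map (fun e => β (ψ e.1) (ψ e.2))).prod

/-- The full weighted homomorphism number `hom(F, G)` (labels ignored). -/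
noncomputable def homT {k : ℕ} {W : Type} [Fintype W] [DecidableEq W]
    (α : W → ℝ) (β : W → W → ℝ) (F : KGraph k) : ℝ :=
  ∑ ψ : F.V → W, (∏ u, α (ψ u)) * (F.edges.map (fun e => β (ψ e.1) (ψ e.2))).prod

/-- Embedding of the vertices of `F₂` into the gluing product `F₁F₂`. -/
noncomputable def KGraph.emb {k : ℕ} (F₁ F₂ : KGraph k) (v : F₂.V) :
    F₁.V ⊕ {v : F₂.V // v ∉ Set.range F₂.lab} :=
  if h : v ∈ Set.range F₂.lab then
    Sum.inl (F₁.lab ((Equiv.ofInjective F₂.lab F₂.lab_inj).symm ⟨v, h⟩))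
  else Sum.inr ⟨v, h⟩

theorem KGraph.emb_inj {k : ℕ} (F₁ F₂ : KGraph k) :
    Function.Injective (KGraph.emb F₁ F₂) := by
  intro a b hab
  by_cases h1 : a ∈ Set.range F₂.lab <;> by_cases h2 : b ∈ Set.range F₂.lab
  · rw [KGraph.emb, dif_pos h1, KGraph.emb, dif_pos h2] at hab
    have h3 := F₁.lab_inj (Sum.inl.inj hab)
    have h4 := (Equiv.ofInjective F₂.lab F₂.lab_inj).symm.injective h3
    simpa using congrArg Subtype.val h4
  · rw [KGraph.emb, dif_pos h1, KGraph.emb, dif_neg h2] at hab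
    exact absurd hab (by simp)
  · rw [KGraph.emb, dif_neg h1, KGraph.emb, dif_pos h2] at hab
    exact absurd hab (by simp)
  · rw [KGraph.emb, dif_neg h1, KGraph.emb, dif_neg h2] at hab
    simpa using Sum.inr.inj hab

/-- The gluing product `F₁F₂` of two `k`-labeled graphs: take the disjoint union
and identify equally-labeled nodes. -/
noncomputable def glue {k : ℕ} (F₁ F₂ : KGraph k) : KGraph k where
  V := F₁.V ⊕ {v : F₂.V // v ∉ Set.range F₂.lab}
  lab := fun i => Sum.inl (F₁.lab i)
  lab_inj := Sum.inl_injective.comp F₁.lab_inj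
  edges := F₁.edges.map (fun e => (Sum.inl e.1, Sum.inl e.2)) +
    F₂.edges.map (fun e => (KGraph.emb F₁ F₂ e.1, KGraph.emb F₁ F₂ e.2))
  loopless := by
    intro e he
    simp only [Multiset.mem_add, Multiset.mem_map] at he
    rcases he with ⟨a, ha, rfl⟩ | ⟨a, ha, rfl⟩
    · simpa using F₁.loopless a ha
    · exact fun h => F₂.loopless a ha (KGraph.emb_inj F₁ F₂ h)

/-- `σ` is an automorphism of the weighted graph given by `(α, β)`. -/
def IsAut {W : Type} (α : W → ℝ) (β : W → W → ℝ) (σ : Equiv.Perm W) : Prop :=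
  (∀ v, α (σ v) = α v) ∧ ∀ u v, β (σ u) (σ v) = β u v

/-- The number of orbits of `Aut(G)` acting coordinatewise on `V(G)^k`. -/
noncomputable def orbCount {W : Type} [Fintype W] (α : W → ℝ) (β : W → W → ℝ)
    (k : ℕ) : ℕ :=
  Nat.card (Quot (fun φ ψ : Fin k → W =>
    ∃ σ : Equiv.Perm W, IsAut α β σ ∧ ψ = σ ∘ φ))

lemma homPhi_aut {k : ℕ} {W : Type} [Fintype W] [DecidableEq W]
    (α : W → ℝ) (β : W → W → ℝ) (σ : Equiv.Perm W) (hσ : IsAut α β σ)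
    (F : KGraph k) (φ : Fin k → W) :
    homPhi α β F (⇑σ ∘ φ) = homPhi α β F φ := by
  unfold homPhi
  refine Finset.sum_nbij' (fun ψ => ⇑σ.symm ∘ ψ) (fun ψ => ⇑σ ∘ ψ) ?_ ?_ ?_ ?_ ?_
  · intro ψ hψ
    simp only [Finset.mem_filter, Finset.mem_univ, true_and] at hψ ⊢
    funext i
    have := congrFun hψ i
    simp only [Function.comp_apply] at this ⊢
    exact σ.injective (by simpa using this)
  · intro ψ hψ
    simp only [Finset.mem_filter, Finset.mem_univ, true_and] at hψ ⊢
    funext i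
    have := congrFun hψ i
    simp only [Function.comp_apply] at this ⊢
    rw [this]
  · intro ψ _; funext v; simp
  · intro ψ _; funext v; simp
  · intro ψ hψ
    simp only [Function.comp_apply]
    congr 1
    · congr 1
      · exact Finset.prod_congr rfl fun u _ => by
          simp [Function.comp_apply, ← hσ.1 (σ.symm (ψ u))]
      · exact Finset.prod_congr rfl fun i _ => hσ.1 (φ i)
    · congr 1
      apply Multiset.map_congr rfl
      intro e _
      show β (ψ e.1) (ψ e.2) = β (σ.symm (ψ e.1)) (σ.symm (ψ e.2))
      conv_lhs => rw [← Equiv.apply_symm_apply σ (ψ e.1), ← Equiv.apply_symm_apply σ (ψ e.2)]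
      exact hσ.2 _ _

lemma emb_lab {k : ℕ} (F₁ F₂ : KGraph k) (i : Fin k) :
    KGraph.emb F₁ F₂ (F₂.lab i) = Sum.inl (F₁.lab i) := by
  rw [KGraph.emb, dif_pos (Set.mem_range_self i)]
  congr 2
  rw [Equiv.symm_apply_eq, Equiv.ofInjective_apply]

lemma elim_emb {k : ℕ} (F₁ F₂ : KGraph k) {W : Type} (ψ₁ : F₁.V → W) (ψ₂ : F₂.V → W)
    (h : ∀ i, ψ₁ (F₁.lab i) = ψ₂ (F₂.lab i)) (v : F₂.V) :
    Sum.elim ψ₁ (fun s => ψ₂ s.1) (KGraph.emb F₁ F₂ v) = ψ₂ v := by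
  by_cases hv : v ∈ Set.range F₂.lab
  · obtain ⟨i, rfl⟩ := hv
    rw [emb_lab]
    exact h i
  · rw [KGraph.emb, dif_neg hv]; rfl

lemma prod_split {k : ℕ} (F₂ : KGraph k) (f : F₂.V → ℝ) :
    ∏ v, f v = (∏ i, f (F₂.lab i)) *
      ∏ s : {v : F₂.V // v ∉ Set.range F₂.lab}, f s.1 := by
  rw [← Finset.prod_mul_prod_compl (Finset.univ.image F₂.lab) f]
  congr 1
  · rw [Finset.prod_image (fun a _ b _ h => F₂.lab_inj h)]
  · rw [Finset.prod_subtype (p := fun v : F₂.V => v ∉ Set.range F₂.lab) _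
        (fun x => by simp [Set.range]) f]

lemma homT_glue {m k : ℕ} (α : Fin m → ℝ) (β : Fin m → Fin m → ℝ)
    (hα : ∀ i, 0 < α i) (F₁ F₂ : KGraph k) :
    homT α β (glue F₁ F₂) =
      ∑ φ : Fin k → Fin m, (∏ i, α (φ i)) * homPhi α β F₁ φ * homPhi α β F₂ φ := by
  rw [homT,
    ← Finset.sum_fiberwise Finset.univ
      (fun ψ : (glue F₁ F₂).V → Fin m => ψ ∘ (glue F₁ F₂).lab)
      (fun ψ => (∏ u, α (ψ u)) *
        ((glue F₁ F₂).edges.map (fun e => β (ψ e.1) (ψ e.2))).prod)]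
  refine Finset.sum_congr rfl fun φ _ => ?_
  have hP : (∏ i, α (φ i)) ≠ 0 := (Finset.prod_pos fun i _ => hα (φ i)).ne'
  rw [homPhi, homPhi, mul_assoc, Finset.sum_mul_sum, Finset.mul_sum]
  simp only [Finset.mul_sum]
  rw [← Finset.sum_product']
  refine Finset.sum_nbij'
    (fun ψ => (ψ ∘ Sum.inl, ψ ∘ KGraph.emb F₁ F₂))
    (fun p => Sum.elim p.1 (fun s => p.2 s.1)) ?_ ?_ ?_ ?_ ?_
  · intro ψ hψ
    simp only [Finset.mem_filter, Finset.mem_univ, true_and] at hψ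
    simp only [Finset.mem_product, Finset.mem_filter, Finset.mem_univ, true_and]
    constructor
    · funext i; exact congrFun hψ i
    · funext i
      show ψ (KGraph.emb F₁ F₂ (F₂.lab i)) = φ i
      rw [emb_lab]
      exact congrFun hψ i
  · intro p hp
    simp only [Finset.mem_product, Finset.mem_filter, Finset.mem_univ, true_and] at hp
    refine Finset.mem_filter.mpr ⟨Finset.mem_univ _, ?_⟩
    funext i
    exact congrFun hp.1 i
  · intro ψ hψ
    funext v
    cases v with
    | inl a => rfl
    | inr s =>
      show ψ (KGraph.emb F₁ F₂ s.1) = ψ (Sum.inr s)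
      rw [KGraph.emb, dif_neg s.2]
  · intro p hp
    simp only [Finset.mem_product, Finset.mem_filter, Finset.mem_univ, true_and] at hp
    have hlab : ∀ i, p.1 (F₁.lab i) = p.2 (F₂.lab i) := fun i =>
      (congrFun hp.1 i).trans (congrFun hp.2 i).symm
    refine Prod.ext rfl ?_
    funext v
    exact elim_emb F₁ F₂ p.1 p.2 hlab v
  · intro ψ hψ
    simp only [Finset.mem_filter, Finset.mem_univ, true_and] at hψ
    have e1 : (∏ u, α (ψ u)) =
        (∏ u, α (ψ (Sum.inl u))) *
          ∏ s : {v : F₂.V // v ∉ Set.range F₂.lab}, α (ψ (Sum.inr s)) :=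
      Fintype.prod_sum_type _
    have e2 : (∏ v, α ((ψ ∘ KGraph.emb F₁ F₂) v)) =
        (∏ i, α (φ i)) *
          ∏ s : {v : F₂.V // v ∉ Set.range F₂.lab}, α (ψ (Sum.inr s)) := by
      rw [prod_split F₂ (fun v => α ((ψ ∘ KGraph.emb F₁ F₂) v))]
      congr 1
      · refine Finset.prod_congr rfl fun i _ => ?_
        show α (ψ (KGraph.emb F₁ F₂ (F₂.lab i))) = α (φ i)
        rw [emb_lab]
        exact congrArg α (congrFun hψ i)
      · refine Finset.prod_congr rfl fun s _ => ?_
        show α (ψ (KGraph.emb F₁ F₂ s.1)) = α (ψ (Sum.inr s))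
        rw [KGraph.emb, dif_neg s.2]
    have e3 : ((glue F₁ F₂).edges.map (fun e => β (ψ e.1) (ψ e.2))).prod =
        (F₁.edges.map (fun e => β ((ψ ∘ Sum.inl) e.1) ((ψ ∘ Sum.inl) e.2))).prod *
        (F₂.edges.map (fun e => β ((ψ ∘ KGraph.emb F₁ F₂) e.1)
          ((ψ ∘ KGraph.emb F₁ F₂) e.2))).prod := by
      show ((Multiset.map (fun e : (F₁.V ⊕ {v : F₂.V // v ∉ Set.range F₂.lab}) ×
        (F₁.V ⊕ {v : F₂.V // v ∉ Set.range F₂.lab}) => β (ψ e.1) (ψ e.2)) (_ + _)).prod = _)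
      rw [Multiset.map_add, Multiset.prod_add, Multiset.map_map, Multiset.map_map]
      rfl
    rw [e1, e3, e2]
    field_simp
    have hc : (∏ x, α ((ψ ∘ Sum.inl) x)) = ∏ u, α (ψ (Sum.inl u)) := rfl
    rw [hc]
    ring

/-- `hom_{σ∘φ}(F,G) = hom_φ(F,G)` for every automorphism `σ`, and hence
the rank of `M(k,G)` is at most the number of orbits of `Aut(G)` on `V(G)^k`. -/
theorem homPhi_aut_invariant_and_rank_le_orb {m k : ℕ}
    (α : Fin m → ℝ) (β : Fin m → Fin m → ℝ)
    (hα : ∀ i, 0 < α i) (hβ : ∀ i j, β i j = β j i) :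
    (∀ σ : Equiv.Perm (Fin m), IsAut α β σ →
      ∀ (F : KGraph k) (φ : Fin k → Fin m),
        homPhi α β F (⇑σ ∘ φ) = homPhi α β F φ) ∧
    Module.rank ℝ ↥(Submodule.span ℝ
        (Set.range fun F₁ : KGraph k => fun F₂ : KGraph k => homT α β (glue F₁ F₂)))
      ≤ (orbCount α β k : Cardinal) := by
  have inv : ∀ σ : Equiv.Perm (Fin m), IsAut α β σ →
      ∀ (F : KGraph k) (φ : Fin k → Fin m),
        homPhi α β F (⇑σ ∘ φ) = homPhi α β F φ :=
    fun σ hσ F φ => homPhi_aut α β σ hσ F φ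
  refine ⟨inv, ?_⟩
  set r : (Fin k → Fin m) → (Fin k → Fin m) → Prop :=
    fun φ ψ => ∃ σ : Equiv.Perm (Fin m), IsAut α β σ ∧ ψ = ⇑σ ∘ φ with hr
  set g : (Fin k → Fin m) → (KGraph k → ℝ) :=
    fun φ F₂ => (∏ i, α (φ i)) * homPhi α β F₂ φ with hg
  have hwd : ∀ φ ψ, r φ ψ → g φ = g ψ := by
    rintro φ ψ ⟨σ, hσ, rfl⟩
    funext F₂
    simp only [hg]
    rw [inv σ hσ F₂ φ]
    congr 1
    refine Finset.prod_congr rfl fun i _ => ?_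
    show α (φ i) = α (σ (φ i))
    exact (hσ.1 (φ i)).symm
  set h : Quot r → (KGraph k → ℝ) := Quot.lift g hwd with hh
  have hsub : (Set.range fun F₁ : KGraph k => fun F₂ : KGraph k => homT α β (glue F₁ F₂)) ⊆
      ↑(Submodule.span ℝ (Set.range h)) := by
    rintro _ ⟨F₁, rfl⟩
    have key : (fun F₂ : KGraph k => homT α β (glue F₁ F₂)) =
        ∑ φ : Fin k → Fin m, homPhi α β F₁ φ • h (Quot.mk r φ) := by
      funext F₂
      rw [Finset.sum_apply, homT_glue α β hα F₁ F₂]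
      refine Finset.sum_congr rfl fun φ _ => ?_
      show (∏ i, α (φ i)) * homPhi α β F₁ φ * homPhi α β F₂ φ =
        homPhi α β F₁ φ • ((∏ i, α (φ i)) * homPhi α β F₂ φ)
      simp only [smul_eq_mul]
      ring
    rw [show (fun F₁ : KGraph k => fun F₂ : KGraph k => homT α β (glue F₁ F₂)) F₁ =
      ∑ φ : Fin k → Fin m, homPhi α β F₁ φ • h (Quot.mk r φ) from key]
    exact Submodule.sum_mem _ fun φ _ =>
      Submodule.smul_mem _ _ (Submodule.subset_span ⟨Quot.mk r φ, rfl⟩)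
  have h1 : Module.rank ℝ ↥(Submodule.span ℝ
      (Set.range fun F₁ : KGraph k => fun F₂ : KGraph k => homT α β (glue F₁ F₂)))
      ≤ Module.rank ℝ ↥(Submodule.span ℝ (Set.range h)) :=
    Submodule.rank_mono (Submodule.span_le.mpr hsub)
  have h2 : Module.rank ℝ ↥(Submodule.span ℝ (Set.range h)) ≤ Cardinal.mk (Set.range h) :=
    rank_span_le _
  have h3 : Cardinal.mk (Set.range h) ≤ Cardinal.lift.{1} (Cardinal.mk (Quot r)) := by
    have := Cardinal.mk_range_le_lift (f := h)
    simpa using this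
  have h4 : Cardinal.lift.{1} (Cardinal.mk (Quot r)) = (orbCount α β k : Cardinal) := by
    rw [show (Cardinal.mk (Quot r)) = ((orbCount α β k : ℕ) : Cardinal.{0}) from
      (Cardinal.cast_toNat_of_lt_aleph0 (Cardinal.lt_aleph0_of_finite (Quot r))).symm,
      Cardinal.lift_natCast]
  exact le_trans h1 (le_trans h2 (h3.trans_eq h4))
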